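/- For every integer n ≥ 3, the 2-colour Ramsey number satisfies R_2(n+1) ≥ R_2(n) + n. -/

import Mathlib

open SimpleGraph
open Finset

/-- The vertex-disjoint union `K_n + K_m` of two complete graphs. -/
def cliqueSum (n m : ℕ) : SimpleGraph (Fin n ⊕ Fin m) :=
  SimpleGraph.fromRel fun x y =>
    (∃ a b, x = Sum.inl a ∧ y = Sum.inl b) ∨ (∃ a b, x = Sum.inr a ∧ y = Sum.inr b)

/-- There is a copy of `H` in `G` that is monochromatic in colour `i`
under the edge-colouring `c`. -/
def MonoCopy {V W : Type*} {r : ℕ} (G : SimpleGraph V) (H : SimpleGraph W)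
    (c : Sym2 V → Fin r) (i : Fin r) : Prop :=
  ∃ f : H →g G, Function.Injective f ∧ ∀ u v, H.Adj u v → c s(f u, f v) = i

/-- `G` is `r`-Ramsey for `H`: every `r`-colouring of the edges of `G`
admits a monochromatic copy of `H`. -/
def IsRamseyFor {V W : Type*} (r : ℕ) (G : SimpleGraph V) (H : SimpleGraph W) : Prop :=
  ∀ c : Sym2 V → Fin r, ∃ i : Fin r, MonoCopy G H c i

/-- `G₁` and `G₂` are `r`-Ramsey equivalent. -/
def RamseyEquiv {V W : Type*} (r : ℕ) (G₁ : SimpleGraph V) (G₂ : SimpleGraph W) : Prop :=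
  ∀ {U : Type*} (G : SimpleGraph U), IsRamseyFor r G G₁ ↔ IsRamseyFor r G G₂

/-- `N` has the Ramsey property for clique sizes `n : Fin r → ℕ`: every `r`-colouring of
the edges of `K_N` admits a colour `i` and an `i`-monochromatic clique of size `n i`. -/
def HasRamseyProp (N : ℕ) {r : ℕ} (n : Fin r → ℕ) : Prop :=
  ∀ c : Sym2 (Fin N) → Fin r, ∃ i : Fin r, ∃ s : Finset (Fin N),
    s.card = n i ∧ ∀ u ∈ s, ∀ v ∈ s, u ≠ v → c s(u, v) = i

/-- The Ramsey number `R_r(n 0, …, n (r-1))`. -/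
noncomputable def ramseyNumber {r : ℕ} (n : Fin r → ℕ) : ℕ :=
  sInf {N | HasRamseyProp N n}

/-!
Take a 2-colouring of `K_{R(n)-1}` with no monochromatic `K_n`, add `n` new vertices spanning a
clique of colour `1`, and give every edge between an old and a new vertex colour `0`. A clique of
colour `0` contains at most one new vertex and a clique of colour `1` cannot mix old and new
vertices, so a monochromatic `K_{n+1}` would leave a monochromatic `K_n` among the old vertices;
hence `R(n+1) > R(n) - 1 + n`. Ramsey's theorem is needed as well: `ramseyNumber` is `0` when no
`N` has the Ramsey property.
-/

theorem Set.Pairwise.insert_of_colour {V α : Type*} {c : Sym2 V → α} {i : α} {t : Set V}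
    (ht : t.Pairwise fun u w => c s(u, w) = i) {v : V} (hv : ∀ u ∈ t, c s(v, u) = i) :
    (insert v t).Pairwise fun u w => c s(u, w) = i :=
  ht.insert fun u hu _ => ⟨hv u hu, Sym2.eq_swap (a := u) ▸ hv u hu⟩

theorem exists_monochromatic_subset {r : ℕ} (n : Fin r → ℕ) :
    ∃ N, ∀ {V : Type*} [DecidableEq V] (c : Sym2 V → Fin r) (s : Finset V), N ≤ #s →
      ∃ i, ∃ t ⊆ s, #t = n i ∧ (t : Set V).Pairwise fun u v => c s(u, v) = i := by
  induction hsum : ∑ i, n i using Nat.strong_induction_on generalizing n with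
  | _ k ih =>
  by_cases hzero : ∃ i, n i = 0
  · obtain ⟨i, hi⟩ := hzero
    exact ⟨0, fun c s _ => ⟨i, ∅, empty_subset s, hi ▸ card_empty, by simp⟩⟩
  push Not at hzero
  have hlt (i : Fin r) : ∑ j, Function.update n i (n i - 1) j < k := by
    refine hsum ▸ sum_lt_sum (fun j _ => ?_)
      ⟨i, mem_univ i, by simpa using Nat.sub_one_lt (hzero i)⟩
    rcases eq_or_ne j i with rfl | hji <;> simp [*]
  choose N hN using fun i => ih _ (hlt i) (Function.update n i (n i - 1)) rfl
  refine ⟨r * ∑ i, N i + 1, fun {V} _ c s hs => ?_⟩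
  obtain ⟨v, hv⟩ : s.Nonempty := card_pos.mp (by omega)
  -- by pigeonhole, for some colour `i` the `i`-neighbourhood `A` of `v` is large enough for the
  -- bound `N i`, in which a colour-`i` clique of size `n i - 1` extends by `v`
  obtain ⟨i, -, hi⟩ := exists_le_card_fiber_of_mul_le_card_of_maps_to
    (s := s.erase v) (f := fun u => c s(v, u)) (n := ∑ i, N i) (fun _ _ => mem_univ _)
    ⟨c s(v, v), mem_univ _⟩ (by rw [card_erase_of_mem hv, card_fin]; omega)
  set A := {u ∈ s.erase v | c s(v, u) = i}
  have hAs : A ⊆ s := (filter_subset _ _).trans (erase_subset v s)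
  obtain ⟨j, t, htA, htcard, ht⟩ := hN i c A ((single_le_sum (by simp) (mem_univ i)).trans hi)
  by_cases hji : j = i
  · subst hji
    have hvt : v ∉ t := fun h => by simpa [A] using htA h
    refine ⟨j, insert v t, insert_subset hv (htA.trans hAs), ?_, ?_⟩
    · rw [card_insert_of_notMem hvt, htcard]; simpa using Nat.succ_pred_eq_of_ne_zero (hzero j)
    · rw [coe_insert]
      exact ht.insert_of_colour fun u hu => (mem_filter.mp (htA hu)).2
  · exact ⟨j, t, htA.trans hAs, by simpa [hji] using htcard, ht⟩

theorem exists_hasRamseyProp {r : ℕ} (n : Fin r → ℕ) : ∃ N, HasRamseyProp N n := by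
  obtain ⟨N, hN⟩ := exists_monochromatic_subset n
  refine ⟨N, fun c => ?_⟩
  obtain ⟨i, t, -, ht⟩ := hN c univ (by simp)
  exact ⟨i, t, ht⟩

theorem HasRamseyProp.le {N r k : ℕ} [NeZero r] (h : HasRamseyProp N fun _ : Fin r => k) :
    k ≤ N := by
  obtain ⟨_, s, hs, -⟩ := h fun _ => 0
  simpa [hs] using card_le_univ s

section CliqueExtension

variable {V W : Type*}

def cliqueExtension (c : Sym2 V → Fin 2) : Sym2 (V ⊕ W) → Fin 2 :=
  Sym2.lift ⟨fun x y => match x, y with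
    | .inl a, .inl b => c s(a, b)
    | .inr _, .inr _ => 1
    | _, _ => 0, by rintro (a | a) (b | b) <;> simp [Sym2.eq_swap]⟩

variable {c : Sym2 V → Fin 2} {i : Fin 2} {t : Finset (V ⊕ W)}

@[simp]
theorem cliqueExtension_inl_inr (a : V) (b : W) : cliqueExtension c s(.inl a, .inr b) = 0 :=
  rfl

@[simp]
theorem cliqueExtension_inr_inr (a b : W) : cliqueExtension (W := W) c s(.inr a, .inr b) = 1 :=
  rfl

theorem Set.Pairwise.toLeft_of_cliqueExtension
    (ht : (t : Set (V ⊕ W)).Pairwise fun x y => cliqueExtension c s(x, y) = i) :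
    (t.toLeft : Set V).Pairwise fun a b => c s(a, b) = i :=
  fun a ha b hb hab => ht (mem_toLeft.mp ha) (mem_toLeft.mp hb) (by simpa using hab)

theorem card_toRight_le_one_of_cliqueExtension
    (ht : (t : Set (V ⊕ W)).Pairwise fun x y => cliqueExtension c s(x, y) = 0) :
    #t.toRight ≤ 1 :=
  card_le_one.mpr fun a ha b hb => by_contra fun hab => by
    simpa using ht (mem_toRight.mp ha) (mem_toRight.mp hb) (by simpa using hab)

theorem toLeft_eq_empty_or_toRight_eq_empty_of_cliqueExtension
    (ht : (t : Set (V ⊕ W)).Pairwise fun x y => cliqueExtension c s(x, y) = 1) :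
    t.toLeft = ∅ ∨ t.toRight = ∅ := by
  by_contra! h
  obtain ⟨⟨a, ha⟩, ⟨b, hb⟩⟩ := h
  simpa using ht (mem_toLeft.mp ha) (mem_toRight.mp hb) Sum.inl_ne_inr

theorem exists_pairwise_of_pairwise_cliqueExtension [Fintype W]
    (ht : (t : Set (V ⊕ W)).Pairwise fun x y => cliqueExtension c s(x, y) = i)
    (hcard : #t = Fintype.card W + 1) :
    ∃ s : Finset V, #s = Fintype.card W ∧ (s : Set V).Pairwise fun a b => c s(a, b) = i := by
  suffices h : Fintype.card W ≤ #t.toLeft by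
    obtain ⟨s, hs, hscard⟩ := exists_subset_card_eq h
    exact ⟨s, hscard, ht.toLeft_of_cliqueExtension.mono hs⟩
  have hsplit := card_toLeft_add_card_toRight (u := t)
  fin_cases i
  · have := card_toRight_le_one_of_cliqueExtension ht
    omega
  · rcases toLeft_eq_empty_or_toRight_eq_empty_of_cliqueExtension ht with h | h
    · have := card_le_univ t.toRight
      rw [h, card_empty, zero_add] at hsplit
      omega
    · rw [h, card_empty, add_zero] at hsplit
      omega

end CliqueExtension

theorem HasRamseyProp.of_add_succ {m n : ℕ} (h : HasRamseyProp (m + n) fun _ : Fin 2 => n + 1) :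
    HasRamseyProp m fun _ : Fin 2 => n := by
  intro c
  let e : Fin (m + n) ≃ Fin m ⊕ Fin n := finSumFinEquiv.symm
  obtain ⟨i, t, htcard, ht⟩ := h (cliqueExtension c ∘ Sym2.map e)
  have ht' : ((t.map e.toEmbedding : Finset _) : Set (Fin m ⊕ Fin n)).Pairwise
      fun x y => cliqueExtension c s(x, y) = i := by
    rw [coe_map, Equiv.coe_toEmbedding, e.injective.injOn.pairwise_image]
    exact ht
  obtain ⟨s, hscard, hs⟩ := exists_pairwise_of_pairwise_cliqueExtension ht'
    (by rw [card_map, htcard, Fintype.card_fin])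
  exact ⟨i, s, by simpa using hscard, hs⟩

theorem stmt_6_general (n : ℕ) :
    ramseyNumber (fun _ : Fin 2 => n) + n ≤ ramseyNumber (fun _ : Fin 2 => n + 1) := by
  obtain ⟨N₀, hN₀⟩ := exists_hasRamseyProp fun _ : Fin 2 => n + 1
  refine le_csInf ⟨N₀, hN₀⟩ fun N (hN : HasRamseyProp N _) => ?_
  obtain ⟨m, rfl⟩ : ∃ m, N = m + n := ⟨N - n, by have := hN.le; omega⟩
  have : ramseyNumber (fun _ : Fin 2 => n) ≤ m := Nat.sInf_le hN.of_add_succ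
  omega

/-- For `n ≥ 3`, the 2-colour Ramsey number satisfies
`R_2(n+1) ≥ R_2(n) + n`. -/
theorem stmt_6 (n : ℕ) (hn : 3 ≤ n) :
    ramseyNumber (fun _ : Fin 2 => n) + n ≤ ramseyNumber (fun _ : Fin 2 => n + 1) :=
  stmt_6_general n
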